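/- arXiv:2505.17725 — 3 statements merged into one kernel-verified Lean document; each statement's English description precedes it below -/
import Mathlib

section
/- Let σ, τ be weight functions in the class W₀ with associated weight matrices {S^(ℓ) : ℓ > 0} and {T^(ℓ) : ℓ > 0}. Then: (a) if there exists ℓ > 0 with T^(2ℓ) ◁ S^(ℓ), then σ⋆̂τ is well-defined (i.e. σ⋆̂τ(t) < +∞ for every t); (b) if σ⋆̂τ is well-defined, then T^(ℓ) ◁ S^(2ℓ) for all ℓ > 0. -/
open Real Filter Asymptotics Set
open scoped ENNReal Topology

noncomputable section

/-- A weight function: nonnegative, non-decreasing on `[0,∞)`, tending to `+∞`. -/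
def IsWeightFct (ω : ℝ → ℝ) : Prop :=
  (∀ t : ℝ, 0 ≤ ω t) ∧ MonotoneOn ω (Ici (0:ℝ)) ∧ Tendsto ω atTop atTop

/-- Condition `(ω₁)`: `ω(2t) = O(ω(t))`. -/
def HasOm1 (ω : ℝ → ℝ) : Prop :=
  ∃ L : ℝ, 1 ≤ L ∧ ∀ t : ℝ, 0 ≤ t → ω (2 * t) ≤ L * (ω t + 1)

/-- Condition `(ω₆)`. -/
def HasOm6 (ω : ℝ → ℝ) : Prop :=
  ∃ H : ℝ, 1 ≤ H ∧ ∀ t : ℝ, 0 ≤ t → 2 * ω t ≤ ω (H * t) + H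

/-- The class `W₀` of (normalized) Braun-Meise-Taylor weight functions. -/
def IsW0 (ω : ℝ → ℝ) : Prop :=
  IsWeightFct ω ∧ ContinuousOn ω (Ici (0:ℝ)) ∧ (∀ t ∈ Icc (0:ℝ) 1, ω t = 0) ∧
    ((fun t : ℝ => Real.log t) =o[atTop] ω) ∧
    ConvexOn ℝ univ (fun y : ℝ => ω (Real.exp y))

/-- Legendre-Fenchel-Young conjugate `φ*_ω`. -/
def phiStar (ω : ℝ → ℝ) (x : ℝ) : ℝ :=
  sSup {z : ℝ | ∃ y : ℝ, 0 ≤ y ∧ z = x * y - ω (Real.exp y)}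

/-- The sequence `W^(ℓ)` of the associated weight matrix of `ω`. -/
def assocSeq (ω : ℝ → ℝ) (ℓ : ℝ) (p : ℕ) : ℝ :=
  Real.exp ((1 / ℓ) * phiStar ω (ℓ * (p : ℝ)))

/-- The weight function `ω_M` associated with a sequence `M`. -/
def omegaSeq (M : ℕ → ℝ) (t : ℝ) : ℝ :=
  sSup {z : ℝ | ∃ p : ℕ, z = Real.log (t ^ p / M p)}

/-- Property `(P_{ω,γ})`. -/
def gammaProp (ω : ℝ → ℝ) (g : ℝ) : Prop :=
  ∃ K : ℝ, 1 < K ∧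
    limsup (fun t : ℝ => ((ω (K ^ g * t) / ω t : ℝ) : EReal)) atTop < (K : EReal)

/-- Property `(P̄_{ω,γ})`. -/
def gammaBarProp (ω : ℝ → ℝ) (g : ℝ) : Prop :=
  ∃ A : ℝ, 1 < A ∧
    (A : EReal) < liminf (fun t : ℝ => ((ω (A ^ g * t) / ω t : ℝ) : EReal)) atTop

/-- The growth index `γ(ω) ∈ [0,∞]`. -/
def gammaIdx (ω : ℝ → ℝ) : ℝ≥0∞ :=
  ⨆ (g : ℝ) (_ : 0 < g ∧ gammaProp ω g), ENNReal.ofReal g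

/-- The growth index `γ̄(ω) ∈ [0,∞]` (`+∞` if no admissible `γ` exists). -/
def gammaBarIdx (ω : ℝ → ℝ) : ℝ≥0∞ :=
  sInf (ENNReal.ofReal '' {g : ℝ | 0 < g ∧ gammaBarProp ω g})

/-- Generalized lower Legendre conjugate `σ ⋆̌ τ`. -/
def lowerConj (σ τ : ℝ → ℝ) (t : ℝ) : ℝ :=
  sInf {z : ℝ | ∃ s : ℝ, 0 < s ∧ z = σ s + τ (t / s)}

/-- Generalized upper Legendre conjugate `σ ⋆̂ τ`. -/
def upperConj (σ τ : ℝ → ℝ) (t : ℝ) : ℝ :=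
  if t = 0 then σ 0 - τ 0 else sSup {z : ℝ | ∃ s : ℝ, 0 ≤ s ∧ z = σ s - τ (s / t)}

/-- `σ ⋆̂ τ` is well-defined, i.e. `σ⋆̂τ(t) < +∞` for every `t`. -/
def UpperConjWD (σ τ : ℝ → ℝ) : Prop :=
  ∀ t : ℝ, 0 < t → BddAbove {z : ℝ | ∃ s : ℝ, 0 ≤ s ∧ z = σ s - τ (s / t)}

/-- Lower Legendre envelope `h_⋆`. -/
def lowerEnv (h : ℝ → ℝ) (t : ℝ) : ℝ :=
  sInf {z : ℝ | ∃ u : ℝ, 0 < u ∧ z = h u + t * u}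

/-- Upper Legendre envelope `h^⋆`. -/
def upperEnv (h : ℝ → ℝ) (t : ℝ) : ℝ :=
  sSup {z : ℝ | ∃ s : ℝ, 0 ≤ s ∧ z = h s - t * s}

/-- `(((ω^ι)^α)_⋆)^{1/α}` (which equals `ω ⋆̌ id^{1/α}`). -/
def lowerCompose (ω : ℝ → ℝ) (α : ℝ) (t : ℝ) : ℝ :=
  lowerEnv (fun u : ℝ => ω (1 / u ^ α)) (t ^ (1 / α))

/-- `(((ω^α)^⋆)^ι)^{1/α}` (which equals `ω ⋆̂ id^{1/α}`). -/
def upperCompose (ω : ℝ → ℝ) (α : ℝ) (t : ℝ) : ℝ :=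
  upperEnv (fun s : ℝ => ω (s ^ α)) (1 / t ^ (1 / α))

/-- Equivalence `σ ∼ τ` of weight functions. -/
def WeightEquiv (σ τ : ℝ → ℝ) : Prop :=
  σ =O[atTop] τ ∧ τ =O[atTop] σ

/-- Relation `M ≼ N` for sequences: `sup_{p ≥ 1} (M_p/N_p)^{1/p} < ∞`. -/
def seqPrec (M N : ℕ → ℝ) : Prop :=
  ∃ C : ℝ, ∀ p : ℕ, 1 ≤ p → (M p / N p) ^ (1 / (p : ℝ)) ≤ C

/-- Relation `M ◁ N` for sequences: `(M_p/N_p)^{1/p} → 0`. -/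
def seqTriangle (M N : ℕ → ℝ) : Prop :=
  Tendsto (fun p : ℕ => (M p / N p) ^ (1 / (p : ℝ))) atTop (𝓝 0)

/-- Equivalence `M ≈ N` of sequences. -/
def seqEquiv (M N : ℕ → ℝ) : Prop := seqPrec M N ∧ seqPrec N M

/-- The Gevrey sequence `G^α`. -/
def gevrey (α : ℝ) (p : ℕ) : ℝ := (p.factorial : ℝ) ^ α

/-- The quotient sequence `μ_p = M_p / M_{p-1}`, `μ₀ = 1`. -/
def quotSeq (M : ℕ → ℝ) : ℕ → ℝ
  | 0 => 1
  | (p + 1) => M (p + 1) / M p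

/-- Condition `(β,Q)`: `liminf_{p} μ_{Qp}/μ_p > Q^β`. -/
def condBQ (M : ℕ → ℝ) (β : ℝ) (Q : ℕ) : Prop :=
  ((((Q : ℝ) ^ β : ℝ)) : EReal) <
    liminf (fun p : ℕ => ((quotSeq M (Q * p) / quotSeq M p : ℝ) : EReal)) atTop

/-- Thilliez's growth index `γ(M) ∈ [0,∞]`. -/
def thilliezIdx (M : ℕ → ℝ) : ℝ≥0∞ :=
  ⨆ (β : ℝ) (_ : 0 ≤ β ∧ ∃ Q : ℕ, 2 ≤ Q ∧ condBQ M β Q), ENNReal.ofReal β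

/-- The Beurling Gelfand-Shilov space `S_(σ)(ℝ)` (membership predicate). -/
def MemSBeurling (σ : ℝ → ℝ) (f : ℝ → ℂ) : Prop :=
  ContDiff ℝ (⊤ : ℕ∞) f ∧ ∀ ℓ : ℝ, 0 < ℓ → ∃ C : ℝ, ∀ x : ℝ, ∀ j k : ℕ,
    (1 + |x|) ^ k * ‖iteratedDeriv j f x‖ ≤ C * assocSeq σ ℓ (j + k)

/-- The polynomial `ψ(x) = x² + 1/4`. -/
def psiMap (x : ℝ) : ℝ := x ^ 2 + 1 / 4

/-- The resolvent operator `R_μ = ∑_m C_{ψ_m}/μ^{m+1}`. -/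
def Rres (μ : ℂ) (f : ℝ → ℂ) (x : ℝ) : ℂ :=
  ∑' m : ℕ, (μ ^ (m + 1))⁻¹ * f (psiMap^[m] x)

section Stmt8Aux

/-- The set whose supremum defines `phiStar`. -/
def phiSet (ω : ℝ → ℝ) (x : ℝ) : Set ℝ :=
  {z : ℝ | ∃ y : ℝ, 0 ≤ y ∧ z = x * y - ω (Real.exp y)}

lemma phiSet_nonempty (ω : ℝ → ℝ) (x : ℝ) : (phiSet ω x).Nonempty :=
  ⟨x * 0 - ω (Real.exp 0), 0, le_refl _, rfl⟩

lemma phiSet_bddAbove {ω : ℝ → ℝ} (hω0 : ∀ t, 0 ≤ ω t)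
    (hlog : (fun t : ℝ => Real.log t) =o[atTop] ω) {x : ℝ} (hx : 0 ≤ x) :
    BddAbove (phiSet ω x) := by
  have hpos : (0:ℝ) < 1 / (x + 1) := by positivity
  obtain ⟨T, hT⟩ := eventually_atTop.mp ((Asymptotics.isLittleO_iff.mp hlog) hpos)
  have hT₁1 : (1:ℝ) ≤ max T 1 := le_max_right _ _
  set Y : ℝ := Real.log (max T 1) with hYdef
  have hY0 : 0 ≤ Y := Real.log_nonneg hT₁1
  refine ⟨x * Y, ?_⟩
  rintro z ⟨y, hy, rfl⟩
  rcases le_total y Y with h | h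
  · have h0 := hω0 (Real.exp y)
    have h1 := mul_le_mul_of_nonneg_left h hx
    linarith
  · have hyT : T ≤ Real.exp y := by
      calc T ≤ max T 1 := le_max_left _ _
        _ = Real.exp Y := (Real.exp_log (by linarith : (0:ℝ) < max T 1)).symm
        _ ≤ Real.exp y := Real.exp_le_exp.mpr h
    have h1 := hT _ hyT
    rw [Real.norm_eq_abs, Real.norm_eq_abs, Real.log_exp,
      abs_of_nonneg hy, abs_of_nonneg (hω0 _)] at h1
    -- h1 : y ≤ 1/(x+1) * ω (exp y)
    have h2 : (x + 1) * y ≤ ω (Real.exp y) := by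
      have hx1 : (0:ℝ) < x + 1 := by linarith
      have h3 := mul_le_mul_of_nonneg_left h1 hx1.le
      have hid : (x+1) * (1/(x+1) * ω (Real.exp y)) = ω (Real.exp y) := by field_simp
      linarith
    linarith [mul_nonneg hx hY0]

lemma le_phiStar {ω : ℝ → ℝ} {x : ℝ} (hbdd : BddAbove (phiSet ω x)) {y : ℝ} (hy : 0 ≤ y) :
    x * y - ω (Real.exp y) ≤ phiStar ω x :=
  le_csSup hbdd ⟨y, hy, rfl⟩

lemma phiStar_le {ω : ℝ → ℝ} {x B : ℝ} (h : ∀ y, 0 ≤ y → x * y - ω (Real.exp y) ≤ B) :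
    phiStar ω x ≤ B :=
  csSup_le (phiSet_nonempty ω x) (by rintro z ⟨y, hy, rfl⟩; exact h y hy)

lemma phiStar_mono {ω : ℝ → ℝ} (hω0 : ∀ t, 0 ≤ ω t)
    (hlog : (fun t : ℝ => Real.log t) =o[atTop] ω) {x x' : ℝ} (hx : 0 ≤ x) (hxx' : x ≤ x') :
    phiStar ω x ≤ phiStar ω x' := by
  refine phiStar_le fun y hy =>
    le_trans ?_ (le_phiStar (phiSet_bddAbove hω0 hlog (hx.trans hxx')) hy)
  have := mul_le_mul_of_nonneg_right hxx' hy
  linarith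

/-- Existence of a (nonnegative) subgradient for a monotone convex function on `ℝ`. -/
lemma exists_subgrad {ψ : ℝ → ℝ} (hconv : ConvexOn ℝ Set.univ ψ) (hmono : Monotone ψ) (z : ℝ) :
    ∃ x₀ : ℝ, 0 ≤ x₀ ∧ (∀ u, u < z → (ψ z - ψ u) / (z - u) ≤ x₀) ∧
      ∀ y, ψ z + x₀ * (y - z) ≤ ψ y := by
  set S : Set ℝ := (fun w => (ψ w - ψ z) / (w - z)) '' Set.Ioi z with hSdef
  have hne : S.Nonempty := ⟨_, ⟨z + 1, by simp, rfl⟩⟩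
  have hlb : ∀ u, u < z → ∀ v ∈ S, (ψ z - ψ u) / (z - u) ≤ v := by
    rintro u hu v ⟨w, hw, rfl⟩
    exact hconv.slope_mono_adjacent (Set.mem_univ u) (Set.mem_univ w) hu (Set.mem_Ioi.mp hw)
  have hbdd : BddBelow S :=
    ⟨(ψ z - ψ (z - 1)) / (z - (z - 1)), fun v hv => hlb (z - 1) (by linarith) v hv⟩
  refine ⟨sInf S, ?_, ?_, ?_⟩
  · refine le_csInf hne ?_
    rintro v ⟨w, hw, rfl⟩
    have hw' : z < w := Set.mem_Ioi.mp hw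
    exact div_nonneg (sub_nonneg.mpr (hmono hw'.le)) (by linarith)
  · exact fun u hu => le_csInf hne (hlb u hu)
  · intro y
    rcases lt_trichotomy y z with h | h | h
    · have h1 : (ψ z - ψ y) / (z - y) ≤ sInf S := le_csInf hne (hlb y h)
      have h2 : ψ z - ψ y ≤ sInf S * (z - y) := (div_le_iff₀ (by linarith)).mp h1
      linarith
    · subst h; simp
    · have h1 : sInf S ≤ (ψ y - ψ z) / (y - z) := csInf_le hbdd ⟨y, Set.mem_Ioi.mpr h, rfl⟩
      have h2 : sInf S * (y - z) ≤ ψ y - ψ z := (le_div_iff₀ (by linarith)).mp h1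
      linarith

lemma ratio_rpow (ω₁ ω₂ : ℝ → ℝ) (a b : ℝ) (p : ℕ) :
    (assocSeq ω₁ a p / assocSeq ω₂ b p) ^ (1 / (p : ℝ)) =
      Real.exp (((1/a) * phiStar ω₁ (a * p) - (1/b) * phiStar ω₂ (b * p)) * (1 / (p : ℝ))) := by
  rw [assocSeq, assocSeq, ← Real.exp_sub, Real.rpow_def_of_pos (Real.exp_pos _), Real.log_exp]

lemma tendsto_exp_comp_zero {u : ℕ → ℝ}
    (h : Tendsto (fun p => Real.exp (u p)) atTop (𝓝 0)) : Tendsto u atTop atBot := by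
  rw [tendsto_atBot]
  intro b
  filter_upwards [h.eventually_lt_const (Real.exp_pos b)] with p hp
  exact (Real.exp_lt_exp.mp hp).le

end Stmt8Aux
set_option maxHeartbeats 1000000 in
/-- Core estimate for part (a). -/
lemma stmt8_partA_bdd (σ τ : ℝ → ℝ)
    (hσ0 : ∀ t, 0 ≤ σ t) (hσmono : MonotoneOn σ (Ici (0:ℝ))) (hσnorm : σ 1 = 0)
    (hσlog : (fun t : ℝ => Real.log t) =o[atTop] σ)
    (hσconv : ConvexOn ℝ univ (fun y : ℝ => σ (Real.exp y)))
    (hτ0 : ∀ t, 0 ≤ τ t) (hτlog : (fun t : ℝ => Real.log t) =o[atTop] τ)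
    (ℓ : ℝ) (hℓ : 0 < ℓ) (t : ℝ) (ht : 0 < t) (p₀ : ℕ)
    (hkey : ∀ p : ℕ, p₀ ≤ p → phiStar τ (2 * ℓ * (p:ℝ)) ≤
      2 * phiStar σ (ℓ * (p:ℝ)) - 2 * ℓ * (p:ℝ) * (max (Real.log t) 0 + 1)) :
    BddAbove {z : ℝ | ∃ s : ℝ, 0 ≤ s ∧ z = σ s - τ (s / t)} := by
  have hψmono : Monotone (fun y : ℝ => σ (Real.exp y)) := fun a b hab =>
    hσmono (Real.exp_pos a).le (Real.exp_pos b).le (Real.exp_le_exp.mpr hab)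
  set L : ℝ := Real.log t with hLdef
  set L' : ℝ := max L 0 with hL'def
  have hLL' : L ≤ L' := le_max_left _ _
  have hL'0 : 0 ≤ L' := le_max_right _ _
  have hApos : (0:ℝ) < 2*ℓ + ℓ*((p₀ : ℝ) + 1) := by positivity
  obtain ⟨T, hT⟩ := eventually_atTop.mp ((Asymptotics.isLittleO_iff.mp hσlog)
    (by positivity : (0:ℝ) < 1 / (2*ℓ + ℓ*((p₀ : ℝ) + 1))))
  have hT₁pos : (0:ℝ) < max T 1 := lt_of_lt_of_le one_pos (le_max_right _ _)
  set zstar : ℝ := max (Real.log (max T 1)) 1 with hzstardef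
  set S₀ : ℝ := max t (Real.exp zstar) with hS₀def
  have hS₀t : t ≤ S₀ := le_max_left _ _
  have hS₀pos : 0 < S₀ := lt_of_lt_of_le ht hS₀t
  refine ⟨max (σ S₀) 0, ?_⟩
  rintro w ⟨s, hs, rfl⟩
  rcases le_total s S₀ with hcase | hcase
  · have h1 : σ s ≤ σ S₀ := hσmono hs hS₀pos.le hcase
    have h2 : 0 ≤ τ (s / t) := hτ0 _
    have h3 : σ S₀ ≤ max (σ S₀) 0 := le_max_left _ _
    linarith
  · -- main case : s ≥ S₀
    have spos : 0 < s := lt_of_lt_of_le hS₀pos hcase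
    set z : ℝ := Real.log s with hzdef
    have hzstar : zstar ≤ z := by
      rw [hzdef, Real.le_log_iff_exp_le spos]
      exact le_trans (le_max_right t _) hcase
    have hz1 : 1 ≤ z := le_trans (le_max_right _ _) hzstar
    have hz0 : 0 ≤ z := by linarith
    have hy0 : 0 ≤ z - L := by
      have : L ≤ z := Real.log_le_log ht (le_trans hS₀t hcase)
      linarith
    have hst : s / t = Real.exp (z - L) := by
      rw [Real.exp_sub, hzdef, hLdef, Real.exp_log spos, Real.exp_log ht]
    have hσs : σ s = σ (Real.exp z) := by rw [hzdef, Real.exp_log spos]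
    rw [hst, hσs]
    -- lower bound on σ (exp z)
    have hTz : T ≤ Real.exp z := by
      calc T ≤ max T 1 := le_max_left _ _
        _ = Real.exp (Real.log (max T 1)) := (Real.exp_log hT₁pos).symm
        _ ≤ Real.exp z := Real.exp_le_exp.mpr (le_trans (le_max_left _ _) hzstar)
    have hψz : (2*ℓ + ℓ*((p₀ : ℝ) + 1)) * z ≤ σ (Real.exp z) := by
      have h1 := hT _ hTz
      rw [Real.norm_eq_abs, Real.norm_eq_abs, Real.log_exp,
        abs_of_nonneg hz0, abs_of_nonneg (hσ0 _), one_div_mul_eq_div] at h1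
      rw [le_div_iff₀ hApos] at h1
      linarith
    -- subgradient at z
    obtain ⟨x₀, hx₀0, hx₀left, hx₀sub⟩ := exists_subgrad hσconv hψmono z
    have hψ00 : σ (Real.exp 0) = 0 := by rw [Real.exp_zero]; exact hσnorm
    have hx₀big : ℓ * ((p₀ : ℝ) + 1) ≤ x₀ := by
      have h1 : (σ (Real.exp z) - σ (Real.exp 0)) / (z - 0) ≤ x₀ := hx₀left 0 (by linarith)
      rw [hψ00, sub_zero, sub_zero] at h1
      have h2 : σ (Real.exp z) ≤ x₀ * z := (div_le_iff₀ (by linarith)).mp h1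
      have h3 : (2*ℓ + ℓ*((p₀ : ℝ) + 1)) * z ≤ x₀ * z := by linarith
      have h4 : (2*ℓ + ℓ*((p₀ : ℝ) + 1)) ≤ x₀ := le_of_mul_le_mul_right
        (by linarith [h3] : (2*ℓ + ℓ*((p₀ : ℝ) + 1)) * z ≤ x₀ * z) (by linarith : (0:ℝ) < z)
      linarith
    have hq4 : 2 * ℓ * z ≤ σ (Real.exp z) := by
      have h1 : 0 ≤ ℓ*((p₀ : ℝ) + 1) * z :=
        mul_nonneg (mul_nonneg hℓ.le (by positivity)) hz0
      linarith
    obtain ⟨p, hpp₀, hppos, hpx, hxp⟩ :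
        ∃ p : ℕ, p₀ ≤ p ∧ (1:ℝ) ≤ (p:ℝ) ∧ ℓ * (p:ℝ) ≤ x₀ ∧ x₀ ≤ ℓ * (p:ℝ) + ℓ := by
      have hℓp₀ : 0 ≤ ℓ * (p₀:ℝ) := by positivity
      refine ⟨⌊x₀ / ℓ⌋₊, ?_, ?_, ?_, ?_⟩
      · have h1 : p₀ + 1 ≤ ⌊x₀ / ℓ⌋₊ := by
          apply Nat.le_floor
          rw [le_div_iff₀ hℓ]
          push_cast
          linarith
        omega
      · have h1 : 1 ≤ ⌊x₀ / ℓ⌋₊ := by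
          apply Nat.le_floor
          rw [le_div_iff₀ hℓ]
          push_cast
          linarith
        exact_mod_cast h1
      · have h1 : (⌊x₀ / ℓ⌋₊ : ℝ) ≤ x₀ / ℓ := Nat.floor_le (by positivity)
        rw [le_div_iff₀ hℓ] at h1
        linarith
      · have h1 : x₀ / ℓ < (⌊x₀ / ℓ⌋₊ : ℝ) + 1 := Nat.lt_floor_add_one _
        rw [div_lt_iff₀ hℓ] at h1
        nlinarith
    have hℓp0 : (0:ℝ) ≤ ℓ * (p:ℝ) := by positivity
    -- key estimates
    have hτlb : (2 * ℓ * (p:ℝ)) * (z - L) - τ (Real.exp (z - L)) ≤ phiStar τ (2 * ℓ * (p:ℝ)) :=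
      le_phiStar (phiSet_bddAbove hτ0 hτlog (by positivity)) hy0
    have hφx₀ : phiStar σ x₀ ≤ x₀ * z - σ (Real.exp z) := by
      apply phiStar_le
      intro y hy
      have h := hx₀sub y
      linarith
    have hφ : phiStar σ (ℓ * (p:ℝ)) ≤ x₀ * z - σ (Real.exp z) :=
      le_trans (phiStar_mono hσ0 hσlog (by positivity) hpx) hφx₀
    have hk := hkey p hpp₀
    have hq1 : x₀ * z ≤ ℓ * (p:ℝ) * z + ℓ * z := by
      have := mul_le_mul_of_nonneg_right hxp hz0
      linarith
    have hq2 : ℓ * (p:ℝ) * L ≤ ℓ * (p:ℝ) * L' :=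
      mul_le_mul_of_nonneg_left hLL' hℓp0
    have hfinal : σ (Real.exp z) - τ (Real.exp (z - L)) ≤ 0 := by
      linarith [hτlb, hφ, hk, hq1, hq2, hq4, hℓp0]
    exact le_trans hfinal (le_max_right (σ S₀) 0)
set_option maxHeartbeats 1000000 in
/-- Core estimate for part (b). -/
lemma stmt8_partB_key (σ τ : ℝ → ℝ)
    (hσ0 : ∀ t, 0 ≤ σ t) (hσlog : (fun t : ℝ => Real.log t) =o[atTop] σ)
    (hwd : UpperConjWD σ τ) (ℓ : ℝ) (hℓ : 0 < ℓ) :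
    Tendsto (fun p : ℕ =>
      ((1/ℓ) * phiStar τ (ℓ * (p:ℝ)) - (1/(2*ℓ)) * phiStar σ (2 * ℓ * (p:ℝ))) * (1 / (p : ℝ)))
      atTop atBot := by
  rw [tendsto_atBot]
  intro M
  obtain ⟨c, hc0, hcM⟩ : ∃ c : ℝ, 0 < c ∧ -c + 1 ≤ M :=
    ⟨|M| + 1, by positivity, by linarith [neg_abs_le M]⟩
  obtain ⟨t, ht, htc⟩ : ∃ t : ℝ, 0 < t ∧ ∀ y : ℝ, t * Real.exp y = Real.exp (y + c) :=
    ⟨Real.exp c, Real.exp_pos c, fun y => by rw [Real.exp_add]; ring⟩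
  obtain ⟨K, hK⟩ := hwd t ht
  have hKbd : ∀ s : ℝ, 0 ≤ s → σ s - τ (s / t) ≤ K := fun s hs => hK ⟨s, hs, rfl⟩
  have hstep : ∀ p : ℕ, phiStar τ (ℓ * (p:ℝ)) ≤
      phiStar σ (ℓ * (p:ℝ)) - (ℓ * (p:ℝ)) * c + K := by
    intro p
    apply phiStar_le
    intro y hy
    have h1 : σ (t * Real.exp y) - τ ((t * Real.exp y) / t) ≤ K := hKbd _ (by positivity)
    have h2 : (t * Real.exp y) / t = Real.exp y := by field_simp
    rw [h2, htc y] at h1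
    have h4 : (ℓ * (p:ℝ)) * (y + c) - σ (Real.exp (y + c)) ≤ phiStar σ (ℓ * (p:ℝ)) :=
      le_phiStar (phiSet_bddAbove hσ0 hσlog (by positivity)) (by positivity)
    linarith
  have hdouble : ∀ p : ℕ, phiStar σ (ℓ * (p:ℝ)) ≤ phiStar σ (2 * ℓ * (p:ℝ)) / 2 := by
    intro p
    apply phiStar_le
    intro y hy
    have h1 : (2 * ℓ * (p:ℝ)) * y - σ (Real.exp y) ≤ phiStar σ (2 * ℓ * (p:ℝ)) :=
      le_phiStar (phiSet_bddAbove hσ0 hσlog (by positivity)) hy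
    have h2 : 0 ≤ σ (Real.exp y) := hσ0 _
    linarith
  filter_upwards [eventually_ge_atTop (max 1 (⌈|K| / ℓ⌉₊ + 1))] with p hp
  have hp1 : (1:ℝ) ≤ (p:ℝ) := by
    have : 1 ≤ p := le_trans (le_max_left _ _) hp
    exact_mod_cast this
  have hppos : (0:ℝ) < (p:ℝ) := by linarith
  have hpK : |K| ≤ ℓ * (p:ℝ) := by
    have h1 : (⌈|K| / ℓ⌉₊ : ℝ) ≤ (p:ℝ) := by
      have : ⌈|K| / ℓ⌉₊ ≤ p := le_trans (by omega : ⌈|K| / ℓ⌉₊ ≤ max 1 (⌈|K| / ℓ⌉₊ + 1)) hp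
      exact_mod_cast this
    have h2 : |K| / ℓ ≤ (⌈|K| / ℓ⌉₊ : ℝ) := Nat.le_ceil _
    have h3 : |K| / ℓ ≤ (p:ℝ) := le_trans h2 h1
    rw [div_le_iff₀ hℓ] at h3
    linarith
  have hA : phiStar τ (ℓ * (p:ℝ)) ≤ phiStar σ (2 * ℓ * (p:ℝ)) / 2 - (ℓ * (p:ℝ)) * c + K := by
    have h1 := hstep p
    have h2 := hdouble p
    linarith
  have hB : (1/ℓ) * phiStar τ (ℓ * (p:ℝ)) - (1/(2*ℓ)) * phiStar σ (2 * ℓ * (p:ℝ)) ≤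
      -((p:ℝ) * c) + K / ℓ := by
    have h1 := mul_le_mul_of_nonneg_left hA (by positivity : (0:ℝ) ≤ 1/ℓ)
    have h2 : (1/ℓ) * (phiStar σ (2 * ℓ * (p:ℝ)) / 2 - (ℓ * (p:ℝ)) * c + K) =
        (1/(2*ℓ)) * phiStar σ (2 * ℓ * (p:ℝ)) - (p:ℝ) * c + K / ℓ := by
      field_simp
    rw [h2] at h1
    linarith
  have hC : (-((p:ℝ) * c) + K / ℓ) * (1 / (p:ℝ)) = -c + K / (ℓ * (p:ℝ)) := by
    field_simp
  have hD : K / (ℓ * (p:ℝ)) ≤ 1 := by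
    rw [div_le_one (by positivity)]
    calc K ≤ |K| := le_abs_self K
      _ ≤ ℓ * (p:ℝ) := hpK
  have hE := mul_le_mul_of_nonneg_right hB (by positivity : (0:ℝ) ≤ 1 / (p:ℝ))
  rw [hC] at hE
  linarith
set_option maxHeartbeats 1000000 in
theorem stmt8 (σ τ : ℝ → ℝ) (hσ : IsW0 σ) (hτ : IsW0 τ) :
    ((∃ ℓ : ℝ, 0 < ℓ ∧ seqTriangle (assocSeq τ (2 * ℓ)) (assocSeq σ ℓ)) →
      UpperConjWD σ τ) ∧
    (UpperConjWD σ τ →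
      ∀ ℓ : ℝ, 0 < ℓ → seqTriangle (assocSeq τ ℓ) (assocSeq σ (2 * ℓ))) := by
  obtain ⟨⟨hσ0, hσmono, -⟩, -, hσnorm, hσlog, hσconv⟩ := hσ
  obtain ⟨⟨hτ0, hτmono, -⟩, -, -, hτlog, -⟩ := hτ
  constructor
  · -- part (a)
    rintro ⟨ℓ, hℓ, hseq⟩
    have hu : Tendsto (fun p : ℕ =>
        ((1/(2*ℓ)) * phiStar τ (2 * ℓ * (p:ℝ)) - (1/ℓ) * phiStar σ (ℓ * (p:ℝ))) * (1 / (p:ℝ)))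
        atTop atBot := by
      apply tendsto_exp_comp_zero
      have heq : (fun p : ℕ => Real.exp
          (((1/(2*ℓ)) * phiStar τ (2 * ℓ * (p:ℝ)) - (1/ℓ) * phiStar σ (ℓ * (p:ℝ))) * (1/(p:ℝ)))) =
          fun p : ℕ => (assocSeq τ (2*ℓ) p / assocSeq σ ℓ p) ^ (1 / (p : ℝ)) := by
        funext p; rw [ratio_rpow]
      rw [heq]
      exact hseq
    intro t ht
    obtain ⟨p₀, hp₀⟩ := eventually_atTop.mp
      (tendsto_atBot.mp hu (-(max (Real.log t) 0 + 1)))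
    have hkey : ∀ p : ℕ, max p₀ 1 ≤ p → phiStar τ (2 * ℓ * (p:ℝ)) ≤
        2 * phiStar σ (ℓ * (p:ℝ)) - 2 * ℓ * (p:ℝ) * (max (Real.log t) 0 + 1) := by
      intro p hp
      have hppos : (0:ℝ) < (p:ℝ) := by
        have : 1 ≤ p := le_trans (le_max_right _ _) hp
        exact_mod_cast this
      have h1 := hp₀ p (le_trans (le_max_left _ _) hp)
      have h2 := mul_le_mul_of_nonneg_right h1 hppos.le
      have h3 : ((1/(2*ℓ)) * phiStar τ (2 * ℓ * (p:ℝ)) - (1/ℓ) * phiStar σ (ℓ * (p:ℝ)))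
          * (1/(p:ℝ)) * (p:ℝ) =
          (1/(2*ℓ)) * phiStar τ (2 * ℓ * (p:ℝ)) - (1/ℓ) * phiStar σ (ℓ * (p:ℝ)) := by
        field_simp
      rw [h3] at h2
      have h4 := mul_le_mul_of_nonneg_left h2 (by positivity : (0:ℝ) ≤ 2*ℓ)
      have h5 : 2*ℓ*((1/(2*ℓ)) * phiStar τ (2 * ℓ * (p:ℝ)) - (1/ℓ) * phiStar σ (ℓ * (p:ℝ))) =
          phiStar τ (2 * ℓ * (p:ℝ)) - 2 * phiStar σ (ℓ * (p:ℝ)) := by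
        field_simp
      rw [h5] at h4
      nlinarith
    exact stmt8_partA_bdd σ τ hσ0 hσmono (hσnorm 1 ⟨zero_le_one, le_refl 1⟩) hσlog hσconv
      hτ0 hτlog ℓ hℓ t ht (max p₀ 1) hkey
  · -- part (b)
    intro hwd ℓ hℓ
    have key := stmt8_partB_key σ τ hσ0 hσlog hwd ℓ hℓ
    have heq : (fun p : ℕ => (assocSeq τ ℓ p / assocSeq σ (2*ℓ) p) ^ (1 / (p : ℝ))) =
        fun p : ℕ => Real.exp
          (((1/ℓ) * phiStar τ (ℓ * (p:ℝ)) - (1/(2*ℓ)) * phiStar σ (2 * ℓ * (p:ℝ)))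
            * (1 / (p : ℝ))) := by
      funext p; rw [ratio_rpow]
    unfold seqTriangle
    rw [heq]
    exact Real.tendsto_exp_atBot.comp key
end
end

section
/- Let σ, τ be weight functions in the class W₀ with associated weight matrices {S^(ℓ) : ℓ > 0} and {T^(ℓ) : ℓ > 0}. The following are equivalent: (i) there exists C > 0 such that for every H ≥ 1 there exists D_H ≥ 1 with σ(Ht) ≤ C·τ(t) + D_H for all t ≥ 0; (ii) there exists d > 0 such that T^(ℓ) ◁ S^(dℓ) for all ℓ > 0; (iii) there exist ℓ, ℓ₁ > 0 with T^(ℓ) ◁ S^(ℓ₁). Moreover, if (i) holds with constant C then (ii) holds with d = C, and if (ii) holds with d then (i) holds with C = 2d. -/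
open Real Filter Asymptotics Set
open scoped ENNReal Topology

noncomputable section

namespace Stmt9Aux

variable {ω : ℝ → ℝ}

lemma phi_nonneg (hω : IsW0 ω) (y : ℝ) : 0 ≤ ω (Real.exp y) := hω.1.1 _

lemma phi_mono (hω : IsW0 ω) {a b : ℝ} (hab : a ≤ b) :
    ω (Real.exp a) ≤ ω (Real.exp b) :=
  hω.1.2.1 (mem_Ici.2 (Real.exp_pos a).le) (mem_Ici.2 (Real.exp_pos b).le)
    (Real.exp_le_exp.2 hab)

lemma phi_zero (hω : IsW0 ω) : ω (Real.exp 0) = 0 := by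
  rw [Real.exp_zero]; exact hω.2.2.1 1 ⟨zero_le_one, le_refl 1⟩

lemma exists_log_bound (hω : IsW0 ω) {c : ℝ} (hc : 0 < c) :
    ∃ Y : ℝ, 1 ≤ Y ∧ ∀ y : ℝ, Y ≤ y → y ≤ c * ω (Real.exp y) := by
  have hlo := hω.2.2.2.1
  rw [Asymptotics.isLittleO_iff] at hlo
  obtain ⟨T, hT⟩ := Filter.eventually_atTop.1 (hlo hc)
  refine ⟨max 1 (Real.log (max T 1)), le_max_left _ _, fun y hy => ?_⟩
  have h1 : max T 1 ≤ Real.exp y := by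
    rw [← Real.exp_log (show (0:ℝ) < max T 1 by positivity)]
    exact Real.exp_le_exp.2 (le_trans (le_max_right _ _) hy)
  have h2 := hT _ (le_trans (le_max_left T 1) h1)
  rw [Real.norm_eq_abs, Real.norm_eq_abs, Real.log_exp,
    abs_of_nonneg (show (0:ℝ) ≤ y from
      le_trans (le_trans zero_le_one (le_max_left _ _)) hy),
    abs_of_nonneg (phi_nonneg hω y)] at h2
  exact h2

lemma bddAbove_set (hω : IsW0 ω) {x : ℝ} (hx : 0 ≤ x) :
    BddAbove {z : ℝ | ∃ y : ℝ, 0 ≤ y ∧ z = x * y - ω (Real.exp y)} := by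
  obtain ⟨Y, hY1, hY⟩ := exists_log_bound hω
    (show (0:ℝ) < 1 / (2 * (x + 1)) by positivity)
  refine ⟨max 0 (x * Y), ?_⟩
  rintro z ⟨y, hy, rfl⟩
  rcases le_or_gt y Y with h | h
  · have h1 : x * y ≤ x * Y := mul_le_mul_of_nonneg_left h hx
    have h2 := phi_nonneg hω y
    have : x * y - ω (Real.exp y) ≤ x * Y := by linarith
    exact le_trans this (le_max_right _ _)
  · have h2 := hY y h.le
    have h3 : (2 * (x + 1)) * y ≤ ω (Real.exp y) := by
      have h4 := mul_le_mul_of_nonneg_left h2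
        (show (0:ℝ) ≤ 2 * (x + 1) by positivity)
      calc (2 * (x + 1)) * y ≤ (2 * (x + 1)) * (1 / (2 * (x + 1)) * ω (Real.exp y)) := h4
        _ = ω (Real.exp y) := by field_simp
    have : x * y - ω (Real.exp y) ≤ 0 := by nlinarith [mul_nonneg hx hy]
    exact le_trans this (le_max_left _ _)

lemma le_phiStar (hω : IsW0 ω) {x y : ℝ} (hx : 0 ≤ x) (hy : 0 ≤ y) :
    x * y - ω (Real.exp y) ≤ phiStar ω x :=
  le_csSup (bddAbove_set hω hx) ⟨y, hy, rfl⟩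

lemma phiStar_le (hω : IsW0 ω) {x B : ℝ}
    (hB : ∀ y : ℝ, 0 ≤ y → x * y - ω (Real.exp y) ≤ B) : phiStar ω x ≤ B := by
  refine csSup_le ⟨x * 0 - ω (Real.exp 0), ⟨0, le_refl 0, rfl⟩⟩ ?_
  rintro z ⟨y, hy, rfl⟩
  exact hB y hy

lemma phiStar_nonneg (hω : IsW0 ω) {x : ℝ} (hx : 0 ≤ x) : 0 ≤ phiStar ω x := by
  have := le_phiStar hω hx (le_refl 0)
  rw [phi_zero hω] at this
  linarith

lemma phiStar_mono (hω : IsW0 ω) {x₁ x₂ : ℝ} (h1 : 0 ≤ x₁) (h : x₁ ≤ x₂) :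
    phiStar ω x₁ ≤ phiStar ω x₂ := by
  apply phiStar_le hω
  intro y hy
  have h2 : x₁ * y ≤ x₂ * y := mul_le_mul_of_nonneg_right h hy
  have := le_phiStar hω (le_trans h1 h) hy
  linarith

lemma exists_near (hω : IsW0 ω) {y₀ : ℝ} {ε : ℝ} (hε : 0 < ε) :
    ∃ x : ℝ, 0 ≤ x ∧ phiStar ω x ≤ x * y₀ - ω (Real.exp y₀) + ε := by
  have hconv := hω.2.2.2.2
  have hcont : ContinuousAt (fun y : ℝ => ω (Real.exp y)) y₀ := by
    have h1 : ContinuousAt ω (Real.exp y₀) :=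
      (hω.2.1 _ (mem_Ici.2 (Real.exp_pos y₀).le)).continuousAt
        (Ici_mem_nhds (Real.exp_pos y₀))
    exact h1.comp Real.continuous_exp.continuousAt
  have hev : ∀ᶠ y in 𝓝 y₀, ω (Real.exp y₀) - ε < ω (Real.exp y) := by
    have := hcont.eventually_mem (Ioi_mem_nhds
      (show ω (Real.exp y₀) - ε < ω (Real.exp y₀) by linarith))
    simpa using this
  obtain ⟨δ, hδpos, hδ⟩ := Metric.eventually_nhds_iff.1 hev
  set d : ℝ := δ / 2 with hdDef
  have hdpos : 0 < d := by positivity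
  have hclose : ω (Real.exp y₀) - ε < ω (Real.exp (y₀ - d)) := by
    apply hδ
    rw [Real.dist_eq]
    rw [show y₀ - d - y₀ = -d by ring, abs_neg, abs_of_pos hdpos]
    rw [hdDef]; linarith
  set x : ℝ := (ω (Real.exp y₀) - ω (Real.exp (y₀ - d))) / d with hxDef
  have hmono' : ω (Real.exp (y₀ - d)) ≤ ω (Real.exp y₀) :=
    phi_mono hω (by linarith)
  have hxnn : 0 ≤ x := div_nonneg (by linarith) hdpos.le
  have hxd : x * d = ω (Real.exp y₀) - ω (Real.exp (y₀ - d)) := by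
    rw [hxDef]; field_simp
  refine ⟨x, hxnn, ?_⟩
  apply phiStar_le hω
  intro y hy
  rcases lt_trichotomy y y₀ with hlt | heq | hgt
  · rcases lt_or_ge y (y₀ - d) with hlt2 | hge2
    · have hs := hconv.secant_mono_aux3 (mem_univ y) (mem_univ y₀) hlt2
        (show y₀ - d < y₀ by linarith)
      -- (φ y₀ - φ y)/(y₀ - y) ≤ (φ y₀ - φ (y₀-d))/(y₀ - (y₀-d))
      have he : (ω (Real.exp y₀) - ω (Real.exp (y₀ - d))) / (y₀ - (y₀ - d)) = x := by
        rw [hxDef, show y₀ - (y₀ - d) = d by ring]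
      rw [he] at hs
      have h5 : ω (Real.exp y₀) - ω (Real.exp y) ≤ x * (y₀ - y) :=
        (div_le_iff₀ (by linarith : (0:ℝ) < y₀ - y)).1 hs
      nlinarith
    · have h6 : ω (Real.exp (y₀ - d)) ≤ ω (Real.exp y) := phi_mono hω hge2
      have h7 : x * y ≤ x * y₀ := mul_le_mul_of_nonneg_left hlt.le hxnn
      nlinarith
  · subst heq; linarith
  · have hs := hconv.slope_mono_adjacent (mem_univ (y₀ - d)) (mem_univ y)
      (show y₀ - d < y₀ by linarith) hgt
    have he : (ω (Real.exp y₀) - ω (Real.exp (y₀ - d))) / (y₀ - (y₀ - d)) = x := by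
      rw [hxDef, show y₀ - (y₀ - d) = d by ring]
    rw [he] at hs
    have h5 : x * (y - y₀) ≤ ω (Real.exp y) - ω (Real.exp y₀) :=
      (le_div_iff₀ (by linarith : (0:ℝ) < y - y₀)).1 hs
    nlinarith



variable {σ τ : ℝ → ℝ}

lemma phiStar_shift (hσ : IsW0 σ) (hτ : IsW0 τ) {C h D : ℝ} (hC : 0 < C) (hh : 0 ≤ h)
    (hP : ∀ t : ℝ, 0 ≤ t → σ (Real.exp h * t) ≤ C * τ t + D) {x : ℝ} (hx : 0 ≤ x) :
    C * phiStar τ x + C * x * h ≤ phiStar σ (C * x) + D := by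
  have hB : phiStar τ x ≤ (phiStar σ (C * x) + D) / C - x * h := by
    apply phiStar_le hτ
    intro y hy
    have key := le_phiStar hσ (mul_nonneg hC.le hx) (add_nonneg hy hh)
    -- key : C*x*(y+h) - σ (exp (y+h)) ≤ phiStar σ (C*x)
    have hP' := hP (Real.exp y) (Real.exp_pos y).le
    rw [← Real.exp_add, add_comm h y] at hP'
    -- hP' : σ (exp (y + h)) ≤ C * τ (exp y) + D
    rw [le_sub_iff_add_le, le_div_iff₀ hC]
    nlinarith
  have h2 := mul_le_mul_of_nonneg_left hB hC.le
  have e1 : C * ((phiStar σ (C * x) + D) / C - x * h)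
      = phiStar σ (C * x) + D - C * x * h := by field_simp
  rw [e1] at h2
  linarith

lemma lemL1 (hσ : IsW0 σ) (hτ : IsW0 τ) {C : ℝ} (hC : 0 < C)
    (hP : ∀ H : ℝ, 1 ≤ H → ∃ D : ℝ, 1 ≤ D ∧ ∀ t : ℝ, 0 ≤ t → σ (H * t) ≤ C * τ t + D)
    {ℓ : ℝ} (hℓ : 0 < ℓ) : seqTriangle (assocSeq τ ℓ) (assocSeq σ (C * ℓ)) := by
  have hCℓ : (0:ℝ) < C * ℓ := mul_pos hC hℓ
  have hrw : ∀ p : ℕ, (assocSeq τ ℓ p / assocSeq σ (C * ℓ) p) ^ (1 / (p : ℝ))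
      = Real.exp (((1 / ℓ) * phiStar τ (ℓ * p)
          - (1 / (C * ℓ)) * phiStar σ (C * ℓ * p)) * (1 / (p : ℝ))) := by
    intro p
    rw [assocSeq, assocSeq, ← Real.exp_sub,
      Real.rpow_def_of_pos (Real.exp_pos _), Real.log_exp]
  unfold seqTriangle
  simp only [hrw]
  refine Real.tendsto_exp_atBot.comp ?_
  rw [tendsto_atBot]
  intro b
  set h : ℝ := |b| + 1 with hhdef
  have hh : 0 ≤ h := by positivity
  obtain ⟨D, hD1, hD⟩ := hP (Real.exp h) (Real.one_le_exp hh)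
  filter_upwards [eventually_ge_atTop (⌈D / (C * ℓ)⌉₊ + 1)] with p hp
  have hp1 : 1 ≤ p := le_trans (Nat.le_add_left 1 _) hp
  have hp0 : (0:ℝ) < p := by exact_mod_cast hp1
  have hpD : D / (C * ℓ) ≤ (p : ℝ) := by
    calc D / (C * ℓ) ≤ (⌈D / (C * ℓ)⌉₊ : ℝ) := Nat.le_ceil _
      _ ≤ (p : ℝ) := by exact_mod_cast le_trans (Nat.le_add_right _ 1) hp
  have h1 := phiStar_shift hσ hτ hC hh hD (mul_nonneg hℓ.le (Nat.cast_nonneg p))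
  rw [show C * (ℓ * (p:ℝ)) = C * ℓ * (p:ℝ) by ring] at h1
  -- h1 : C * ψ*(ℓp) + C*(ℓ*p)*h ≤ φ*(Cℓp) + D
  have hpos : (0:ℝ) ≤ 1 / (C * ℓ) := by positivity
  have h2 := mul_le_mul_of_nonneg_left h1 hpos
  have e1 : (1 / (C * ℓ)) * (C * phiStar τ (ℓ * p) + C * ℓ * (p:ℝ) * h)
      = (1 / ℓ) * phiStar τ (ℓ * p) + (p : ℝ) * h := by field_simp
  have e2 : (1 / (C * ℓ)) * (phiStar σ (C * ℓ * p) + D)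
      = (1 / (C * ℓ)) * phiStar σ (C * ℓ * p) + D / (C * ℓ) := by ring
  rw [e1, e2] at h2
  have h3 : ((1 / ℓ) * phiStar τ (ℓ * p) - (1 / (C * ℓ)) * phiStar σ (C * ℓ * p))
      * (1 / (p : ℝ)) ≤ (D / (C * ℓ) - (p : ℝ) * h) * (1 / (p : ℝ)) :=
    mul_le_mul_of_nonneg_right (by linarith) (by positivity)
  have e3 : (D / (C * ℓ) - (p : ℝ) * h) * (1 / (p : ℝ))
      = (D / (C * ℓ)) * (1 / (p : ℝ)) - h := by field_simp
  rw [e3] at h3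
  have h4 : (D / (C * ℓ)) * (1 / (p : ℝ)) ≤ 1 := by
    rw [mul_one_div, div_le_one hp0]
    exact hpD
  have := neg_abs_le b
  calc ((1 / ℓ) * phiStar τ (ℓ * p) - (1 / (C * ℓ)) * phiStar σ (C * ℓ * p))
      * (1 / (p : ℝ)) ≤ (D / (C * ℓ)) * (1 / (p : ℝ)) - h := h3
    _ ≤ 1 - h := by linarith
    _ ≤ b := by rw [hhdef]; linarith

lemma lemL2 (hσ : IsW0 σ) (hτ : IsW0 τ) {ℓ ℓ₁ : ℝ} (hℓ : 0 < ℓ) (hℓ₁ : 0 < ℓ₁)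
    (htri : seqTriangle (assocSeq τ ℓ) (assocSeq σ ℓ₁)) :
    ∀ H : ℝ, 1 ≤ H → ∃ D : ℝ, 1 ≤ D ∧
      ∀ t : ℝ, 0 ≤ t → σ (H * t) ≤ (2 * (ℓ₁ / ℓ)) * τ t + D := by
  intro H hH
  have hH0 : (0:ℝ) < H := by linarith
  set h : ℝ := Real.log H with hhdef
  have hhnn : 0 ≤ h := Real.log_nonneg hH
  have hHe : H = Real.exp h := (Real.exp_log hH0).symm
  have hev : ∀ᶠ p : ℕ in atTop,
      (assocSeq τ ℓ p / assocSeq σ ℓ₁ p) ^ (1 / (p : ℝ)) < Real.exp (-h) :=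
    htri.eventually_lt_const (Real.exp_pos (-h))
  obtain ⟨N, hN⟩ := Filter.eventually_atTop.1 hev
  set p₀ : ℕ := max N 1 with hp₀def
  have hkey : ∀ p : ℕ, p₀ ≤ p →
      (ℓ₁ / ℓ) * phiStar τ (ℓ * p) + ℓ₁ * p * h ≤ phiStar σ (ℓ₁ * p) := by
    intro p hp
    have h1 := hN p (le_trans (le_max_left _ _) hp)
    have hp1 : (1:ℝ) ≤ (p:ℝ) := by
      exact_mod_cast le_trans (le_max_right N 1) hp
    have hp0 : (0:ℝ) < (p:ℝ) := by linarith
    rw [assocSeq, assocSeq, ← Real.exp_sub,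
      Real.rpow_def_of_pos (Real.exp_pos _), Real.log_exp, Real.exp_lt_exp] at h1
    have h2 : (1/ℓ) * phiStar τ (ℓ * p) - (1/ℓ₁) * phiStar σ (ℓ₁ * p) < -h * p := by
      have h3 := mul_lt_mul_of_pos_right h1 hp0
      calc (1/ℓ) * phiStar τ (ℓ * p) - (1/ℓ₁) * phiStar σ (ℓ₁ * p)
          = ((1/ℓ) * phiStar τ (ℓ * p) - (1/ℓ₁) * phiStar σ (ℓ₁ * p))
            * (1 / (p:ℝ)) * (p:ℝ) := by field_simp
        _ < -h * (p:ℝ) := h3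
    have h3 := mul_le_mul_of_nonneg_left h2.le hℓ₁.le
    have e1 : ℓ₁ * ((1/ℓ) * phiStar τ (ℓ * p) - (1/ℓ₁) * phiStar σ (ℓ₁ * p))
        = (ℓ₁ / ℓ) * phiStar τ (ℓ * p) - phiStar σ (ℓ₁ * p) := by field_simp
    have e2 : ℓ₁ * (-h * (p:ℝ)) = -(ℓ₁ * p * h) := by ring
    rw [e1, e2] at h3
    linarith
  obtain ⟨Y, hY1, hY⟩ := exists_log_bound hσ
    (show (0:ℝ) < 1 / (2 * ℓ₁ * ((p₀ : ℝ) + 1)) by positivity)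
  refine ⟨max 2 (σ (H * Real.exp Y)), le_trans one_le_two (le_max_left _ _), ?_⟩
  intro t ht
  have hτnn : 0 ≤ τ t := hτ.1.1 t
  have hCnn : (0:ℝ) ≤ 2 * (ℓ₁ / ℓ) := by positivity
  have hD2 : (2:ℝ) ≤ max 2 (σ (H * Real.exp Y)) := le_max_left _ _
  rcases le_or_gt t (Real.exp Y) with hcase | hcase
  · have hmono : σ (H * t) ≤ σ (H * Real.exp Y) :=
      hσ.1.2.1 (mem_Ici.2 (mul_nonneg hH0.le ht))
        (mem_Ici.2 (mul_nonneg hH0.le (Real.exp_pos Y).le))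
        (mul_le_mul_of_nonneg_left hcase hH0.le)
    have := le_max_right 2 (σ (H * Real.exp Y))
    nlinarith [mul_nonneg hCnn hτnn]
  · have ht0 : 0 < t := lt_trans (Real.exp_pos Y) hcase
    set y : ℝ := Real.log t with hydef
    have hty : t = Real.exp y := (Real.exp_log ht0).symm
    have hyY : Y ≤ y := by
      rw [hydef, ← Real.log_exp Y]
      exact Real.log_le_log (Real.exp_pos Y) hcase.le
    have hy0 : 0 ≤ y := le_trans (le_trans zero_le_one hY1) hyY
    have hy'Y : Y ≤ y + h := by linarith
    have hy'0 : 0 ≤ y + h := by linarith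
    have hHt : H * t = Real.exp (y + h) := by
      rw [hHe, hty, ← Real.exp_add, add_comm h y]
    rw [hHt, hty]
    -- goal : σ (exp (y+h)) ≤ 2*(ℓ₁/ℓ) * τ (exp y) + max 2 (σ (H * exp Y))
    obtain ⟨x, hx0, hxnear⟩ := exists_near hσ (y₀ := y + h) one_pos
    set p : ℕ := ⌊x / ℓ₁⌋₊ with hpdef
    have hp1 : ℓ₁ * p ≤ x := by
      have h5 := Nat.floor_le (div_nonneg hx0 hℓ₁.le)
      calc ℓ₁ * (p:ℝ) ≤ ℓ₁ * (x / ℓ₁) := mul_le_mul_of_nonneg_left h5 hℓ₁.le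
        _ = x := by field_simp
    have hp2 : x ≤ ℓ₁ * ((p:ℝ) + 1) := by
      have h5 := (Nat.lt_floor_add_one (x / ℓ₁)).le
      calc x = ℓ₁ * (x / ℓ₁) := by field_simp
        _ ≤ ℓ₁ * ((p:ℝ) + 1) := mul_le_mul_of_nonneg_left h5 hℓ₁.le
    have hmainσ : σ (Real.exp (y + h))
        ≤ ℓ₁ * ((p:ℝ) + 1) * (y + h) - phiStar σ (ℓ₁ * p) + 1 := by
      have hm := phiStar_mono hσ (mul_nonneg hℓ₁.le (Nat.cast_nonneg p)) hp1
      have hxy' : x * (y + h) ≤ ℓ₁ * ((p:ℝ) + 1) * (y + h) :=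
        mul_le_mul_of_nonneg_right hp2 hy'0
      linarith
    have hsup : ℓ₁ * ((p₀:ℝ) + 1) * (y + h) ≤ σ (Real.exp (y + h)) / 2 := by
      have h5 := hY (y + h) hy'Y
      have h6 := mul_le_mul_of_nonneg_left h5
        (show (0:ℝ) ≤ 2 * ℓ₁ * ((p₀:ℝ) + 1) by positivity)
      have e6 : (2 * ℓ₁ * ((p₀:ℝ) + 1))
          * (1 / (2 * ℓ₁ * ((p₀:ℝ) + 1)) * σ (Real.exp (y + h)))
          = σ (Real.exp (y + h)) := by field_simp
      rw [e6] at h6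
      linarith
    rcases le_or_gt p₀ p with hpp | hpp
    · have hk := hkey p hpp
      have hψ := le_phiStar hτ (mul_nonneg hℓ.le (Nat.cast_nonneg p)) hy0
      -- hψ : ℓ*p * y - τ (exp y) ≤ phiStar τ (ℓ*p)
      have h5 := mul_le_mul_of_nonneg_left hψ (div_nonneg hℓ₁.le hℓ.le)
      have e5 : (ℓ₁ / ℓ) * (ℓ * (p:ℝ) * y - τ (Real.exp y))
          = ℓ₁ * (p:ℝ) * y - (ℓ₁ / ℓ) * τ (Real.exp y) := by field_simp
      rw [e5] at h5
      have hℓ₁y' : ℓ₁ * (y + h) ≤ ℓ₁ * ((p₀:ℝ) + 1) * (y + h) := by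
        refine mul_le_mul_of_nonneg_right ?_ hy'0
        exact le_mul_of_one_le_right hℓ₁.le (by have := Nat.cast_nonneg (α := ℝ) p₀; linarith)
      linarith [hmainσ, hk, h5, hsup, hℓ₁y', hD2]
    · have hφnn := phiStar_nonneg hσ (mul_nonneg hℓ₁.le (Nat.cast_nonneg p))
      have hpp' : (p:ℝ) + 1 ≤ (p₀:ℝ) := by exact_mod_cast hpp
      have h7 : ℓ₁ * ((p:ℝ) + 1) * (y + h) ≤ ℓ₁ * ((p₀:ℝ) + 1) * (y + h) := by
        refine mul_le_mul_of_nonneg_right (mul_le_mul_of_nonneg_left ?_ hℓ₁.le) hy'0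
        linarith
      linarith [mul_nonneg hCnn (hτ.1.1 (Real.exp y)), hmainσ, hφnn, h7, hsup, hD2]

end Stmt9Aux

theorem stmt9 (σ τ : ℝ → ℝ) (hσ : IsW0 σ) (hτ : IsW0 τ) :
    ((∃ C : ℝ, 0 < C ∧ ∀ H : ℝ, 1 ≤ H → ∃ D : ℝ, 1 ≤ D ∧
        ∀ t : ℝ, 0 ≤ t → σ (H * t) ≤ C * τ t + D)
      ↔ (∃ d : ℝ, 0 < d ∧ ∀ ℓ : ℝ, 0 < ℓ → seqTriangle (assocSeq τ ℓ) (assocSeq σ (d * ℓ)))) ∧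
    ((∃ d : ℝ, 0 < d ∧ ∀ ℓ : ℝ, 0 < ℓ → seqTriangle (assocSeq τ ℓ) (assocSeq σ (d * ℓ)))
      ↔ (∃ ℓ : ℝ, 0 < ℓ ∧ ∃ ℓ₁ : ℝ, 0 < ℓ₁ ∧ seqTriangle (assocSeq τ ℓ) (assocSeq σ ℓ₁))) ∧
    (∀ C : ℝ, 0 < C →
      (∀ H : ℝ, 1 ≤ H → ∃ D : ℝ, 1 ≤ D ∧ ∀ t : ℝ, 0 ≤ t → σ (H * t) ≤ C * τ t + D) →
      ∀ ℓ : ℝ, 0 < ℓ → seqTriangle (assocSeq τ ℓ) (assocSeq σ (C * ℓ))) ∧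
    (∀ d : ℝ, 0 < d →
      (∀ ℓ : ℝ, 0 < ℓ → seqTriangle (assocSeq τ ℓ) (assocSeq σ (d * ℓ))) →
      ∀ H : ℝ, 1 ≤ H → ∃ D : ℝ, 1 ≤ D ∧ ∀ t : ℝ, 0 ≤ t → σ (H * t) ≤ (2 * d) * τ t + D) := by
  have p3 : ∀ C : ℝ, 0 < C →
      (∀ H : ℝ, 1 ≤ H → ∃ D : ℝ, 1 ≤ D ∧ ∀ t : ℝ, 0 ≤ t → σ (H * t) ≤ C * τ t + D) →
      ∀ ℓ : ℝ, 0 < ℓ → seqTriangle (assocSeq τ ℓ) (assocSeq σ (C * ℓ)) :=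
    fun C hC hP ℓ hℓ => Stmt9Aux.lemL1 hσ hτ hC hP hℓ
  have p4 : ∀ d : ℝ, 0 < d →
      (∀ ℓ : ℝ, 0 < ℓ → seqTriangle (assocSeq τ ℓ) (assocSeq σ (d * ℓ))) →
      ∀ H : ℝ, 1 ≤ H → ∃ D : ℝ, 1 ≤ D ∧
        ∀ t : ℝ, 0 ≤ t → σ (H * t) ≤ (2 * d) * τ t + D := by
    intro d hd hQ H hH
    obtain ⟨D, hD1, hD⟩ := Stmt9Aux.lemL2 hσ hτ one_pos
      (show (0:ℝ) < d * 1 by simpa using hd) (hQ 1 one_pos) H hH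
    refine ⟨D, hD1, fun t ht => ?_⟩
    have h1 := hD t ht
    have e : (2 * (d * 1 / 1)) * τ t = (2 * d) * τ t := by ring
    linarith [h1, e]
  refine ⟨⟨?_, ?_⟩, ⟨?_, ?_⟩, p3, p4⟩
  · rintro ⟨C, hC, hP⟩; exact ⟨C, hC, p3 C hC hP⟩
  · rintro ⟨d, hd, hQ⟩; exact ⟨2 * d, by positivity, p4 d hd hQ⟩
  · rintro ⟨d, hd, hQ⟩
    exact ⟨1, one_pos, d * 1, by simpa using hd, hQ 1 one_pos⟩
  · rintro ⟨ℓ, hℓ, ℓ₁, hℓ₁, htri⟩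
    have hP := Stmt9Aux.lemL2 hσ hτ hℓ hℓ₁ htri
    have hC : (0:ℝ) < 2 * (ℓ₁ / ℓ) := by positivity
    exact ⟨2 * (ℓ₁ / ℓ), hC, fun ℓ' hℓ' => Stmt9Aux.lemL1 hσ hτ hC hP hℓ'⟩
end
end

section
/- Let σ, τ be weight functions in the class W₀ with associated weight matrices {S^(ℓ) : ℓ > 0} and {T^(ℓ) : ℓ > 0}. Then: (a) if T^(j) ◁ S^(ℓ) holds for all j, ℓ > 0, then σ(t) = o(τ(t)) as t → +∞; (b) if σ or τ satisfies condition (ω₁) and σ(t) = o(τ(t)) as t → +∞, then T^(j) ◁ S^(ℓ) for all j, ℓ > 0. -/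
open Real Filter Asymptotics Set
open scoped ENNReal Topology

noncomputable section

-- ====== AUX ======
namespace Stmt12Aux

variable {ω : ℝ → ℝ}

lemma omega_one (hω : IsW0 ω) : ω 1 = 0 := hω.2.2.1 1 ⟨zero_le_one, le_refl 1⟩

lemma pS_nonempty (ω : ℝ → ℝ) (x : ℝ) :
    Set.Nonempty {z : ℝ | ∃ y : ℝ, 0 ≤ y ∧ z = x * y - ω (Real.exp y)} :=
  ⟨x * 0 - ω (Real.exp 0), 0, le_refl _, rfl⟩

lemma pS_bdd (hω : IsW0 ω) {x : ℝ} (hx : 0 ≤ x) :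
    BddAbove {z : ℝ | ∃ y : ℝ, 0 ≤ y ∧ z = x * y - ω (Real.exp y)} := by
  have hlo : (fun t : ℝ => Real.log t) =o[atTop] ω := hω.2.2.2.1
  obtain ⟨a, ha⟩ := Filter.eventually_atTop.1 (hlo.def (c := 1/(x+1)) (by positivity))
  refine ⟨x * |a|, ?_⟩
  rintro z ⟨y, hy, rfl⟩
  rcases le_or_gt (|a|) y with hcy | hcy
  · have hay : a ≤ Real.exp y := by
      have := Real.add_one_le_exp y
      have : y ≤ Real.exp y := by linarith
      linarith [le_abs_self a]
    have h2 := ha (Real.exp y) hay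
    rw [Real.log_exp] at h2
    have hnorm : ‖ω (Real.exp y)‖ = ω (Real.exp y) := Real.norm_of_nonneg (hω.1.1 _)
    rw [hnorm, Real.norm_eq_abs, abs_of_nonneg hy] at h2
    have hxy : (x+1) * y ≤ ω (Real.exp y) := by
      rw [div_mul_eq_mul_div, le_div_iff₀ (by positivity)] at h2
      linarith
    nlinarith [abs_nonneg a]
  · have := hω.1.1 (Real.exp y)
    nlinarith [abs_nonneg a]

lemma le_phiStar (hω : IsW0 ω) {x y : ℝ} (hx : 0 ≤ x) (hy : 0 ≤ y) :
    x * y - ω (Real.exp y) ≤ phiStar ω x :=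
  le_csSup (pS_bdd hω hx) ⟨y, hy, rfl⟩

lemma phiStar_le (ω : ℝ → ℝ) {x M : ℝ} (h : ∀ y : ℝ, 0 ≤ y → x * y - ω (Real.exp y) ≤ M) :
    phiStar ω x ≤ M := by
  refine csSup_le (pS_nonempty ω x) ?_
  rintro z ⟨y, hy, rfl⟩
  exact h y hy

lemma phiStar_nonneg (hω : IsW0 ω) {x : ℝ} (hx : 0 ≤ x) : 0 ≤ phiStar ω x := by
  have h := le_phiStar hω hx (le_refl 0)
  simpa [Real.exp_zero, omega_one hω] using h

lemma phiStar_mono (hω : IsW0 ω) {x x' : ℝ} (hx : 0 ≤ x) (h : x ≤ x') :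
    phiStar ω x ≤ phiStar ω x' := by
  refine phiStar_le ω fun y hy => ?_
  have h1 : x * y ≤ x' * y := mul_le_mul_of_nonneg_right h hy
  have h2 := le_phiStar hω (hx.trans h) hy
  linarith


/-- Fenchel inversion via subgradient: `ω(e^{y₀}) ≤ m y₀ - φ*(m)` for some `m ≥ 0`. -/
lemma subgrad (hω : IsW0 ω) {y₀ : ℝ} (hy₀ : 0 ≤ y₀) :
    ∃ m : ℝ, 0 ≤ m ∧ ω (Real.exp y₀) ≤ m * y₀ - phiStar ω m := by
  set f : ℝ → ℝ := fun y => ω (Real.exp y) with hf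
  have hconv : ConvexOn ℝ univ f := hω.2.2.2.2
  have hf0 : f 0 = 0 := by simp [hf, Real.exp_zero, omega_one hω]
  have hfnn : ∀ y, 0 ≤ f y := fun y => hω.1.1 _
  rcases eq_or_lt_of_le hy₀ with h0 | h0
  · refine ⟨0, le_refl 0, ?_⟩
    have hps : phiStar ω 0 ≤ 0 := phiStar_le ω fun y hy => by
      have := hfnn y; simp only [zero_mul, zero_sub]; linarith [hω.1.1 (Real.exp y)]
    rw [← h0]
    simp [Real.exp_zero, omega_one hω]
    linarith
  · set S : Set ℝ := {s : ℝ | ∃ y : ℝ, 0 ≤ y ∧ y < y₀ ∧ s = (f y₀ - f y)/(y₀ - y)} with hS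
    have hSne : S.Nonempty := ⟨(f y₀ - f 0)/(y₀ - 0), 0, le_refl 0, h0, rfl⟩
    have hSbdd : BddAbove S := by
      refine ⟨(f (y₀+1) - f y₀)/((y₀+1) - y₀), ?_⟩
      rintro s ⟨y, hy, hyl, rfl⟩
      exact hconv.slope_mono_adjacent (mem_univ y) (mem_univ (y₀+1)) hyl (lt_add_one y₀)
    set m := sSup S with hm
    have hm0 : 0 ≤ m := by
      refine le_trans ?_ (le_csSup hSbdd ⟨0, le_refl 0, h0, rfl⟩)
      rw [hf0, sub_zero, sub_zero]
      exact div_nonneg (hfnn y₀) (by linarith)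
    have key : ∀ y : ℝ, 0 ≤ y → m * y - f y ≤ m * y₀ - f y₀ := by
      intro y hy
      rcases lt_trichotomy y y₀ with hlt | heq | hgt
      · have hsl : (f y₀ - f y)/(y₀ - y) ≤ m := le_csSup hSbdd ⟨y, hy, hlt, rfl⟩
        rw [div_le_iff₀ (by linarith : (0:ℝ) < y₀ - y)] at hsl
        nlinarith
      · rw [heq]
      · have hsl : m ≤ (f y - f y₀)/(y - y₀) := by
          refine csSup_le hSne ?_
          rintro s ⟨y', hy', hyl', rfl⟩
          exact hconv.slope_mono_adjacent (mem_univ y') (mem_univ y) hyl' hgt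
        rw [le_div_iff₀ (by linarith : (0:ℝ) < y - y₀)] at hsl
        nlinarith
    have hps : phiStar ω m ≤ m * y₀ - f y₀ := phiStar_le ω fun y hy => key y hy
    exact ⟨m, hm0, by linarith⟩

/-- Iterated consequence of `(ω₁)` for the conjugate. -/
lemma om1_iter (hω : IsW0 ω) {L : ℝ} (hL1 : 1 ≤ L)
    (hL : ∀ t : ℝ, 0 ≤ t → ω (2 * t) ≤ L * (ω t + 1)) :
    ∀ n : ℕ, ∀ x : ℝ, 0 ≤ x →
      L^n * phiStar ω x + (n : ℝ) * Real.log 2 * (L^n * x) - (n : ℝ) * L^n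
        ≤ phiStar ω (L^n * x) := by
  have hLpos : (0:ℝ) < L := by linarith
  have hc : (0:ℝ) < Real.log 2 := Real.log_pos one_lt_two
  have step : ∀ x : ℝ, 0 ≤ x →
      L * phiStar ω x + L * (Real.log 2 * x - 1) ≤ phiStar ω (L * x) := by
    intro x hx
    have h : phiStar ω x ≤ (phiStar ω (L * x) - L * (Real.log 2 * x - 1)) / L := by
      refine phiStar_le ω fun y hy => ?_
      rw [le_div_iff₀ hLpos]
      have hy2 : 0 ≤ y + Real.log 2 := by linarith
      have h1 := le_phiStar hω (x := L * x) (by positivity) hy2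
      have h2 : Real.exp (y + Real.log 2) = 2 * Real.exp y := by
        rw [Real.exp_add, Real.exp_log two_pos]; ring
      rw [h2] at h1
      have h3 := hL (Real.exp y) (Real.exp_pos y).le
      nlinarith
    rw [le_div_iff₀ hLpos] at h
    nlinarith
  intro n
  induction n with
  | zero => intro x hx; simp
  | succ n ih =>
    intro x hx
    have h1 := ih x hx
    have h2 := step (L^n * x) (by positivity)
    have hLn : (0:ℝ) < L^n := by positivity
    have hLL : L ≤ L^(n+1) := le_self_pow₀ (by linarith) (Nat.succ_ne_zero n)
    have hpow : L^(n+1) = L * L^n := by ring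
    rw [hpow]
    have hgoal : L * (L^n * phiStar ω x + (n:ℝ) * Real.log 2 * (L^n * x) - (n:ℝ) * L^n)
        + L * (Real.log 2 * (L^n * x) - 1) ≤ phiStar ω (L * (L^n * x)) := by
      refine le_trans ?_ h2
      have := mul_le_mul_of_nonneg_left h1 hLpos.le
      linarith
    rw [show L * (L^n * x) = L * L^n * x by ring] at hgoal
    rw [hpow] at hLL
    push_cast
    nlinarith [hgoal, hLL]

lemma littleO_conj {σ τ : ℝ → ℝ} (hσ : IsW0 σ) (hτ : IsW0 τ) (ho : σ =o[atTop] τ)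
    {C : ℝ} (hC : 0 < C) :
    ∃ B : ℝ, 0 ≤ B ∧ ∀ x : ℝ, 0 ≤ x → phiStar τ x ≤ C * phiStar σ (x / C) + B := by
  obtain ⟨a, ha⟩ := Filter.eventually_atTop.1 (ho.def (c := 1/C) (by positivity))
  set y₀ := |a| with hy₀
  have hy₀0 : (0:ℝ) ≤ y₀ := abs_nonneg a
  have key : ∀ y : ℝ, y₀ ≤ y → C * σ (Real.exp y) ≤ τ (Real.exp y) := by
    intro y hy
    have hay : a ≤ Real.exp y := by
      have h1 := Real.add_one_le_exp y
      linarith [le_abs_self a]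
    have h2 := ha (Real.exp y) hay
    rw [Real.norm_of_nonneg (hσ.1.1 _), Real.norm_of_nonneg (hτ.1.1 _)] at h2
    rw [div_mul_eq_mul_div, le_div_iff₀ hC] at h2
    linarith
  refine ⟨C * σ (Real.exp y₀), mul_nonneg hC.le (hσ.1.1 _), fun x hx => ?_⟩
  have hxC : 0 ≤ x / C := by positivity
  refine phiStar_le τ fun y hy => ?_
  rcases le_or_gt y₀ y with hcy | hcy
  · have h1 := key y hcy
    have h2 := le_phiStar hσ hxC hy
    have h3 : C * (x / C * y - σ (Real.exp y)) ≤ C * phiStar σ (x / C) :=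
      mul_le_mul_of_nonneg_left h2 hC.le
    have h4 : C * (x / C) = x := by field_simp
    nlinarith [mul_nonneg hC.le (hσ.1.1 (Real.exp y₀))]
  · have h2 := le_phiStar hσ hxC hy₀0
    have h3 : C * (x / C * y₀ - σ (Real.exp y₀)) ≤ C * phiStar σ (x / C) :=
      mul_le_mul_of_nonneg_left h2 hC.le
    have h4 : C * (x / C) = x := by field_simp
    have h5 : x * y ≤ x * y₀ := mul_le_mul_of_nonneg_left hcy.le hx
    have h6 := hτ.1.1 (Real.exp y)
    nlinarith

lemma ratio_eq (σ τ : ℝ → ℝ) (j ℓ : ℝ) (p : ℕ) :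
    (assocSeq τ j p / assocSeq σ ℓ p) ^ (1 / (p:ℝ))
      = Real.exp (((1/j) * phiStar τ (j*(p:ℝ)) - (1/ℓ) * phiStar σ (ℓ*(p:ℝ))) * (1/(p:ℝ))) := by
  unfold assocSeq
  rw [← Real.exp_sub, Real.rpow_def_of_pos (Real.exp_pos _), Real.log_exp]

lemma partA {σ τ : ℝ → ℝ} (hσ : IsW0 σ) (hτ : IsW0 τ)
    (H : ∀ j : ℝ, 0 < j → ∀ ℓ : ℝ, 0 < ℓ → seqTriangle (assocSeq τ j) (assocSeq σ ℓ)) :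
    σ =o[atTop] τ := by
  rw [Asymptotics.isLittleO_iff]
  intro ε hε
  set C : ℝ := 3 / ε with hCdef
  have hC : 0 < C := by positivity
  have Hseq := H 1 one_pos (1/C) (by positivity)
  have key : ∀ᶠ p : ℕ in atTop, phiStar τ (p:ℝ) ≤ C * phiStar σ ((p:ℝ)/C) := by
    have h1 := Hseq.eventually_lt_const one_pos
    filter_upwards [h1, eventually_ge_atTop 1] with p hp hp1
    rw [ratio_eq, Real.exp_lt_one_iff] at hp
    have hd : (1/(1:ℝ)) * phiStar τ (1*(p:ℝ)) - (1/(1/C)) * phiStar σ ((1/C)*(p:ℝ)) < 0 := by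
      by_contra hcon
      push_neg at hcon
      exact absurd hp (not_lt.2 (mul_nonneg hcon (by positivity)))
    rw [show (1:ℝ)*(p:ℝ) = (p:ℝ) by ring, show (1/C)*(p:ℝ) = (p:ℝ)/C by ring,
      one_div_one_div] at hd
    nlinarith [hd]
  obtain ⟨p₁, hp₁⟩ := Filter.eventually_atTop.1 key
  set K := phiStar τ (p₁:ℝ) with hK
  have hK0 : 0 ≤ K := phiStar_nonneg hτ (Nat.cast_nonneg p₁)
  have hall : ∀ p : ℕ, phiStar τ (p:ℝ) ≤ C * phiStar σ ((p:ℝ)/C) + K := by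
    intro p
    rcases le_or_gt p₁ p with h | h
    · linarith [hp₁ p h]
    · have h1 : phiStar τ (p:ℝ) ≤ phiStar τ (p₁:ℝ) :=
        phiStar_mono hτ (Nat.cast_nonneg p) (by exact_mod_cast h.le)
      have h2 : 0 ≤ phiStar σ ((p:ℝ)/C) := phiStar_nonneg hσ (by positivity)
      nlinarith
  have hpt : ∀ t : ℝ, 1 ≤ t → C * σ t ≤ τ t + K + Real.log t := by
    intro t ht
    have ht0 : 0 < t := lt_of_lt_of_le one_pos ht
    set y := Real.log t with hy
    have hy0 : 0 ≤ y := Real.log_nonneg ht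
    have hexp : Real.exp y = t := Real.exp_log ht0
    obtain ⟨m, hm0, hm⟩ := subgrad hσ hy0
    rw [hexp] at hm
    set p := ⌊C * m⌋₊ with hp
    have hple : (p:ℝ) ≤ C * m := Nat.floor_le (by positivity)
    have hplt : C * m < (p:ℝ) + 1 := Nat.lt_floor_add_one _
    have h1 : phiStar σ ((p:ℝ)/C) ≤ phiStar σ m := by
      apply phiStar_mono hσ (by positivity)
      rw [div_le_iff₀ hC]; linarith
    have h2 : (p:ℝ) * y - phiStar τ (p:ℝ) ≤ τ t := by
      have h := le_phiStar hτ (x := (p:ℝ)) (Nat.cast_nonneg p) hy0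
      rw [hexp] at h
      linarith
    have h3 := hall p
    have hA := mul_le_mul_of_nonneg_left hm hC.le
    have hB := mul_le_mul_of_nonneg_left h1 hC.le
    have h4 : (C*m)*y ≤ ((p:ℝ)+1)*y := mul_le_mul_of_nonneg_right hplt.le hy0
    nlinarith [hA, hB, h4, h3, h2]
  have e1 : ∀ᶠ t : ℝ in atTop, Real.log t ≤ τ t := by
    have h := (hτ.2.2.2.1).def one_pos
    filter_upwards [h, eventually_ge_atTop (1:ℝ)] with t h1 h2
    rw [Real.norm_of_nonneg (Real.log_nonneg h2), Real.norm_of_nonneg (hτ.1.1 t), one_mul] at h1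
    exact h1
  have e2 : ∀ᶠ t : ℝ in atTop, K ≤ τ t := hτ.1.2.2.eventually_ge_atTop K
  filter_upwards [e1, e2, eventually_ge_atTop (1:ℝ)] with t h1 h2 h3
  have h4 := hpt t h3
  rw [Real.norm_of_nonneg (hσ.1.1 t), Real.norm_of_nonneg (hτ.1.1 t)]
  have h5 : C * σ t ≤ 3 * τ t := by linarith
  rw [show ε = 3 / C by rw [hCdef]; field_simp]
  rw [div_mul_eq_mul_div, le_div_iff₀ hC]
  nlinarith

lemma div_step {j ℓ X Y A p : ℝ} (hj : 0 < j) (hl : 0 < ℓ)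
    (h : ℓ*X - j*Y ≤ -(A*p)*(j*ℓ)) :
    (1/j)*X - (1/ℓ)*Y ≤ -(A*p) := by
  have hjl : (0:ℝ) < j*ℓ := mul_pos hj hl
  have heq : (1/j)*X - (1/ℓ)*Y = (ℓ*X - j*Y)/(j*ℓ) := by field_simp
  rw [heq, div_le_iff₀ hjl]
  exact h

lemma partB {σ τ : ℝ → ℝ} (hσ : IsW0 σ) (hτ : IsW0 τ)
    (hom : HasOm1 σ ∨ HasOm1 τ) (ho : σ =o[atTop] τ)
    {j ℓ : ℝ} (hj : 0 < j) (hl : 0 < ℓ) :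
    seqTriangle (assocSeq τ j) (assocSeq σ ℓ) := by
  suffices hd : ∀ A : ℝ, 0 < A → ∀ᶠ p : ℕ in atTop,
      (1/j) * phiStar τ (j*(p:ℝ)) - (1/ℓ) * phiStar σ (ℓ*(p:ℝ)) ≤ -(A*(p:ℝ)) by
    unfold seqTriangle
    have heq : (fun p : ℕ => (assocSeq τ j p / assocSeq σ ℓ p) ^ (1/(p:ℝ)))
        = fun p : ℕ => Real.exp (((1/j) * phiStar τ (j*(p:ℝ))
            - (1/ℓ) * phiStar σ (ℓ*(p:ℝ))) * (1/(p:ℝ))) := by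
      funext p; exact ratio_eq σ τ j ℓ p
    rw [heq]
    apply Real.tendsto_exp_atBot.comp
    rw [tendsto_atBot]
    intro b
    have hA : (0:ℝ) < max 1 (-b) := lt_of_lt_of_le one_pos (le_max_left _ _)
    filter_upwards [hd (max 1 (-b)) hA, eventually_ge_atTop 1] with p h1 h2
    have hp0 : (0:ℝ) < (p:ℝ) := by exact_mod_cast h2
    have h3 : ((1/j) * phiStar τ (j*(p:ℝ)) - (1/ℓ) * phiStar σ (ℓ*(p:ℝ))) * (1/(p:ℝ))
        ≤ -(max 1 (-b)) := by
      rw [mul_one_div, div_le_iff₀ hp0]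
      nlinarith [h1]
    have h4 : -(max 1 (-b)) ≤ b := by
      have := le_max_right 1 (-b); linarith
    exact le_trans h3 h4
  intro A hA
  have hc : (0:ℝ) < Real.log 2 := Real.log_pos one_lt_two
  obtain ⟨n, hn⟩ := exists_nat_ge ((A+1)/Real.log 2)
  have hnc : A + 1 ≤ (n:ℝ) * Real.log 2 := by
    rw [div_le_iff₀ hc] at hn; linarith
  rcases hom with homm | homm
  · obtain ⟨L, hL1, hL⟩ := homm
    have hLpos : (0:ℝ) < L := by linarith
    set P : ℝ := L^n with hP
    have hPpos : (0:ℝ) < P := by positivity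
    have hP1 : (1:ℝ) ≤ P := one_le_pow₀ hL1
    obtain ⟨B, hB0, hB⟩ := littleO_conj hσ hτ ho (C := j*P/ℓ) (by positivity)
    filter_upwards [eventually_ge_atTop ⌈(n:ℝ)*P/ℓ + B/j + 1⌉₊] with p hp
    have hpR : (n:ℝ)*P/ℓ + B/j + 1 ≤ (p:ℝ) :=
      le_trans (Nat.le_ceil _) (by exact_mod_cast hp)
    have hp0 : (0:ℝ) ≤ (p:ℝ) := Nat.cast_nonneg p
    have h1 := hB (j*(p:ℝ)) (by positivity)
    rw [show (j*(p:ℝ))/(j*P/ℓ) = (ℓ/P)*(p:ℝ) by field_simp <;> ring] at h1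
    have h2 := om1_iter hσ hL1 hL n ((ℓ/P)*(p:ℝ)) (by positivity)
    rw [← hP, show P*((ℓ/P)*(p:ℝ)) = ℓ*(p:ℝ) by field_simp] at h2
    apply div_step hj hl
    have h1' : ℓ * phiStar τ (j*(p:ℝ)) ≤ j*P*phiStar σ ((ℓ/P)*(p:ℝ)) + ℓ*B := by
      have h := mul_le_mul_of_nonneg_left h1 hl.le
      rw [mul_add, show ℓ*((j*P/ℓ)*phiStar σ ((ℓ/P)*(p:ℝ)))
          = j*P*phiStar σ ((ℓ/P)*(p:ℝ)) by field_simp <;> ring] at h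
      linarith
    have h2j := mul_le_mul_of_nonneg_left h2 hj.le
    have hpR' : j*(n:ℝ)*P + ℓ*B + j*ℓ ≤ j*ℓ*(p:ℝ) := by
      have h := mul_le_mul_of_nonneg_left hpR (by positivity : (0:ℝ) ≤ j*ℓ)
      rw [show j*ℓ*((n:ℝ)*P/ℓ + B/j + 1) = j*(n:ℝ)*P + ℓ*B + j*ℓ by field_simp <;> ring] at h
      linarith
    have hprod : 0 ≤ ((n:ℝ)*Real.log 2 - (A+1)) * (j*ℓ*(p:ℝ)) :=
      mul_nonneg (by linarith) (by positivity)
    nlinarith [h1', h2j, hpR', hprod]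
  · obtain ⟨L, hL1, hL⟩ := homm
    have hLpos : (0:ℝ) < L := by linarith
    set P : ℝ := L^n with hP
    have hPpos : (0:ℝ) < P := by positivity
    have hP1 : (1:ℝ) ≤ P := one_le_pow₀ hL1
    obtain ⟨B, hB0, hB⟩ := littleO_conj hσ hτ ho (C := j*P/ℓ) (by positivity)
    filter_upwards [eventually_ge_atTop ⌈(B + (n:ℝ))/j + 1⌉₊] with p hp
    have hpR : (B + (n:ℝ))/j + 1 ≤ (p:ℝ) :=
      le_trans (Nat.le_ceil _) (by exact_mod_cast hp)
    have hp0 : (0:ℝ) ≤ (p:ℝ) := Nat.cast_nonneg p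
    have h1 := hB (P*(j*(p:ℝ))) (by positivity)
    rw [show (P*(j*(p:ℝ)))/(j*P/ℓ) = ℓ*(p:ℝ) by field_simp <;> ring] at h1
    have h2 := om1_iter hτ hL1 hL n (j*(p:ℝ)) (by positivity)
    rw [← hP] at h2
    apply div_step hj hl
    -- h2 : P * X + n*log2*(P*(j*p)) - n*P ≤ phiStar τ (P*(j*p))
    -- h1 : phiStar τ (P*(j*p)) ≤ (j*P/ℓ)*Y + B
    have h1' : ℓ * phiStar τ (P*(j*(p:ℝ))) ≤ j*P*phiStar σ (ℓ*(p:ℝ)) + ℓ*B := by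
      have h := mul_le_mul_of_nonneg_left h1 hl.le
      rw [mul_add, show ℓ*((j*P/ℓ)*phiStar σ (ℓ*(p:ℝ)))
          = j*P*phiStar σ (ℓ*(p:ℝ)) by field_simp <;> ring] at h
      linarith
    have h2l := mul_le_mul_of_nonneg_left h2 hl.le
    have hpR' : B + (n:ℝ) + j ≤ j*(p:ℝ) := by
      have h := mul_le_mul_of_nonneg_left hpR hj.le
      rw [show j*((B + (n:ℝ))/j + 1) = B + (n:ℝ) + j by field_simp <;> ring] at h
      linarith
    have hprod : 0 ≤ ((n:ℝ)*Real.log 2 - (A+1)) * (P*(j*ℓ*(p:ℝ))) :=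
      mul_nonneg (by linarith) (by positivity)
    have hprod2 : 0 ≤ (P - 1) * (ℓ*B) :=
      mul_nonneg (by linarith) (by positivity)
    have hpP := mul_le_mul_of_nonneg_left hpR' (by positivity : (0:ℝ) ≤ P*ℓ)
    have hnum : P * (ℓ * phiStar τ (j*(p:ℝ)))
        ≤ P * (j * phiStar σ (ℓ*(p:ℝ)) - (A*(p:ℝ))*(j*ℓ)) := by
      nlinarith [h1', h2l, hpP, hprod, hprod2, mul_nonneg (mul_nonneg hPpos.le hl.le) hj.le]
    have hfin := le_of_mul_le_mul_left hnum hPpos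
    linarith
end Stmt12Aux


theorem stmt12 (σ τ : ℝ → ℝ) (hσ : IsW0 σ) (hτ : IsW0 τ) :
    ((∀ j : ℝ, 0 < j → ∀ ℓ : ℝ, 0 < ℓ → seqTriangle (assocSeq τ j) (assocSeq σ ℓ)) →
      σ =o[atTop] τ) ∧
    ((HasOm1 σ ∨ HasOm1 τ) → (σ =o[atTop] τ) →
      ∀ j : ℝ, 0 < j → ∀ ℓ : ℝ, 0 < ℓ → seqTriangle (assocSeq τ j) (assocSeq σ ℓ)) :=
  ⟨fun H => Stmt12Aux.partA hσ hτ H,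
   fun hom ho j hj ℓ hl => Stmt12Aux.partB hσ hτ hom ho hj hl⟩
end
end
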